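/- In the setting of the time-varying unitary extension with ξ(t+1) = F(t)ξ(t) + G(t)w(t), w̄(t) = H(t)ξ(t) + J(t)w(t), U(t) orthogonal, (w(t)) normalized white noise uncorrelated with ξ at the same time, and Φ(t+k, t) := F(t+k−1)···F(t): for all k ≥ 1, E[w̄(t+k) w̄(t)ᵀ] = H(t+k) Φ(t+k, t+1) (F(t) H(t)ᵀ + G(t) J(t)ᵀ) = 0, so w̄ is a white noise process. -/

import Mathlib

/-!
The future noise `w r`, `r > t`, is uncorrelated with `w̄ t`, so the cross-covariance of the
state with `w̄ t` is propagated by the transition matrix alone: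
`E[ξ(t+1+k) w̄(t)ᵀ] = Φ(t+1+k, t+1) E[ξ(t+1) w̄(t)ᵀ]`, and the normalisation gives
`E[ξ(t+1) w̄(t)ᵀ] = F(t) H(t)ᵀ + G(t) J(t)ᵀ`. That matrix is the off-diagonal block of
`U(t) U(t)ᵀ = I`, hence zero.
-/

open Matrix MeasureTheory

/-- Cross-covariance matrix E[x yᵀ] of two (centered) random vectors. -/
noncomputable def cov {Ω : Type*} [MeasurableSpace Ω] (ℙ : Measure Ω) {n m : ℕ}
    (x : Ω → Fin n → ℝ) (y : Ω → Fin m → ℝ) : Matrix (Fin n) (Fin m) ℝ :=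
  Matrix.of fun i j => ∫ ω, x ω i * y ω j ∂ℙ

theorem Matrix.mul_transpose_add_mul_transpose_eq_zero_of_fromBlocks
    {l m : Type*} [Fintype l] [Fintype m] [DecidableEq l] [DecidableEq m] {R : Type*}
    [Semiring R] {A : Matrix l l R} {B : Matrix l m R} {C : Matrix m l R} {D : Matrix m m R}
    (h : fromBlocks A B C D * (fromBlocks A B C D)ᵀ = 1) :
    A * Cᵀ + B * Dᵀ = 0 := by
  rw [fromBlocks_transpose, fromBlocks_multiply, ← fromBlocks_one] at h
  exact (fromBlocks_inj.mp h).2.1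

section Covariance

variable {Ω : Type*} [MeasurableSpace Ω] {ℙ : Measure Ω} {n m p q : ℕ}

theorem memLp_mulVec_apply (A : Matrix (Fin m) (Fin n) ℝ) {x : Ω → Fin n → ℝ}
    (hx : ∀ i, MemLp (fun ω => x ω i) 2 ℙ) (i : Fin m) :
    MemLp (fun ω => (A *ᵥ x ω) i) 2 ℙ := by
  simpa only [mulVec, dotProduct] using
    memLp_finsetSum Finset.univ fun k _ => (hx k).const_mul (A i k)

theorem memLp_mulVec_add_mulVec_apply (A : Matrix (Fin q) (Fin n) ℝ)
    (B : Matrix (Fin q) (Fin m) ℝ) {x : Ω → Fin n → ℝ} {z : Ω → Fin m → ℝ}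
    (hx : ∀ i, MemLp (fun ω => x ω i) 2 ℙ) (hz : ∀ i, MemLp (fun ω => z ω i) 2 ℙ) (i : Fin q) :
    MemLp (fun ω => (A *ᵥ x ω + B *ᵥ z ω) i) 2 ℙ :=
  (memLp_mulVec_apply A hx i).add (memLp_mulVec_apply B hz i)

theorem cov_transpose (x : Ω → Fin n → ℝ) (y : Ω → Fin m → ℝ) :
    (cov ℙ x y)ᵀ = cov ℙ y x := by
  ext i j
  simp [cov, mul_comm]

theorem cov_mulVec_add_mulVec_left (A : Matrix (Fin q) (Fin n) ℝ)
    (B : Matrix (Fin q) (Fin m) ℝ) {x : Ω → Fin n → ℝ} {z : Ω → Fin m → ℝ}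
    {y : Ω → Fin p → ℝ} (hx : ∀ i, MemLp (fun ω => x ω i) 2 ℙ)
    (hz : ∀ i, MemLp (fun ω => z ω i) 2 ℙ) (hy : ∀ j, MemLp (fun ω => y ω j) 2 ℙ) :
    cov ℙ (fun ω => A *ᵥ x ω + B *ᵥ z ω) y = A * cov ℙ x y + B * cov ℙ z y := by
  ext i j
  have hint : ∀ {r : ℕ} {u : Ω → Fin r → ℝ}, (∀ k, MemLp (fun ω => u ω k) 2 ℙ) →
      ∀ k, Integrable (fun ω => u ω k * y ω j) ℙ :=
    fun hu k => (hu k).integrable_mul (hy j)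
  simp only [cov, of_apply, Matrix.add_apply, Matrix.mul_apply, Pi.add_apply, mulVec, dotProduct,
    add_mul, Finset.sum_mul, mul_assoc]
  rw [integral_add (integrable_finsetSum _ fun k _ => (hint hx k).const_mul _)
      (integrable_finsetSum _ fun k _ => (hint hz k).const_mul _),
    integral_finsetSum _ fun k _ => (hint hx k).const_mul _,
    integral_finsetSum _ fun k _ => (hint hz k).const_mul _]
  simp only [integral_const_mul]

theorem cov_mulVec_add_mulVec_right (A : Matrix (Fin q) (Fin n) ℝ)
    (B : Matrix (Fin q) (Fin m) ℝ) {x : Ω → Fin n → ℝ} {z : Ω → Fin m → ℝ}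
    {y : Ω → Fin p → ℝ} (hx : ∀ i, MemLp (fun ω => x ω i) 2 ℙ)
    (hz : ∀ i, MemLp (fun ω => z ω i) 2 ℙ) (hy : ∀ j, MemLp (fun ω => y ω j) 2 ℙ) :
    cov ℙ y (fun ω => A *ᵥ x ω + B *ᵥ z ω) = cov ℙ y x * Aᵀ + cov ℙ y z * Bᵀ := by
  rw [← cov_transpose, cov_mulVec_add_mulVec_left A B hx hz hy, transpose_add,
    transpose_mul, transpose_mul, cov_transpose, cov_transpose]

end Covariance

section StateSpace

variable {Ω : Type*} [MeasurableSpace Ω] {ℙ : Measure Ω} {n p q : ℕ}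
  {F : ℤ → Matrix (Fin n) (Fin n) ℝ} {G : ℤ → Matrix (Fin n) (Fin p) ℝ}
  {H : ℤ → Matrix (Fin p) (Fin n) ℝ} {J : ℤ → Matrix (Fin p) (Fin p) ℝ}
  {ξ : ℤ → Ω → Fin n → ℝ} {w wbar : ℤ → Ω → Fin p → ℝ}

theorem cov_state_eq_transition_mul
    (hξ2 : ∀ t i, MemLp (fun ω => ξ t ω i) 2 ℙ) (hw2 : ∀ t i, MemLp (fun ω => w t ω i) 2 ℙ)
    (hdyn : ∀ t : ℤ, ξ (t + 1) = fun ω => F t *ᵥ ξ t ω + G t *ᵥ w t ω)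
    {Φ : ℤ → ℕ → Matrix (Fin n) (Fin n) ℝ} (hΦ0 : ∀ s : ℤ, Φ s 0 = 1)
    (hΦ : ∀ (s : ℤ) (k : ℕ), Φ s (k + 1) = F (s + k) * Φ s k)
    {y : Ω → Fin q → ℝ} (hy : ∀ j, MemLp (fun ω => y ω j) 2 ℙ) {s : ℤ}
    (hwy : ∀ r, s ≤ r → cov ℙ (w r) y = 0) (k : ℕ) :
    cov ℙ (ξ (s + k)) y = Φ s k * cov ℙ (ξ s) y := by
  induction k with
  | zero => simp [hΦ0]
  | succ k ih =>
    rw [Nat.cast_succ, ← add_assoc, hdyn, cov_mulVec_add_mulVec_left _ _ (hξ2 _) (hw2 _) hy, ih,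
      hwy _ (by omega), hΦ, Matrix.mul_zero, add_zero, Matrix.mul_assoc]

theorem cov_state_succ_output
    (hξ2 : ∀ t i, MemLp (fun ω => ξ t ω i) 2 ℙ) (hw2 : ∀ t i, MemLp (fun ω => w t ω i) 2 ℙ)
    (hwhite : ∀ t s : ℤ, cov ℙ (w t) (w s) = if t = s then 1 else 0)
    (hξnorm : ∀ t : ℤ, cov ℙ (ξ t) (ξ t) = 1)
    (hξw : ∀ t s : ℤ, t ≤ s → cov ℙ (ξ t) (w s) = 0)
    (hdyn : ∀ t : ℤ, ξ (t + 1) = fun ω => F t *ᵥ ξ t ω + G t *ᵥ w t ω)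
    (hout : ∀ t : ℤ, wbar t = fun ω => H t *ᵥ ξ t ω + J t *ᵥ w t ω) (t : ℤ) :
    cov ℙ (ξ (t + 1)) (wbar t) = F t * (H t)ᵀ + G t * (J t)ᵀ := by
  have hwξ : cov ℙ (w t) (ξ t) = 0 := by rw [← cov_transpose, hξw t t le_rfl, transpose_zero]
  rw [hdyn, hout, cov_mulVec_add_mulVec_left _ _ (hξ2 t) (hw2 t)
      (memLp_mulVec_add_mulVec_apply _ _ (hξ2 t) (hw2 t)),
    cov_mulVec_add_mulVec_right _ _ (hξ2 t) (hw2 t) (hξ2 t),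
    cov_mulVec_add_mulVec_right _ _ (hξ2 t) (hw2 t) (hw2 t), hξnorm, hξw t t le_rfl, hwξ,
    hwhite, if_pos rfl]
  simp

end StateSpace

theorem stmt_15_general {Ω : Type*} [MeasurableSpace Ω] (ℙ : Measure Ω)
    {n p : ℕ} (F : ℤ → Matrix (Fin n) (Fin n) ℝ) (G : ℤ → Matrix (Fin n) (Fin p) ℝ)
    (H : ℤ → Matrix (Fin p) (Fin n) ℝ) (J : ℤ → Matrix (Fin p) (Fin p) ℝ)
    (horth1 : ∀ t : ℤ, Matrix.fromBlocks (F t) (G t) (H t) (J t) *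
      (Matrix.fromBlocks (F t) (G t) (H t) (J t))ᵀ = 1)
    (ξ : ℤ → Ω → Fin n → ℝ) (w wbar : ℤ → Ω → Fin p → ℝ)
    (hξ2 : ∀ t i, MemLp (fun ω => ξ t ω i) 2 ℙ)
    (hw2 : ∀ t i, MemLp (fun ω => w t ω i) 2 ℙ)
    (hwhite : ∀ t s : ℤ, cov ℙ (w t) (w s) = if t = s then 1 else 0)
    (hξnorm : ∀ t : ℤ, cov ℙ (ξ t) (ξ t) = 1)
    (hξw : ∀ t s : ℤ, t ≤ s → cov ℙ (ξ t) (w s) = 0)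
    (hdyn : ∀ t : ℤ, ξ (t + 1) = fun ω => (F t).mulVec (ξ t ω) + (G t).mulVec (w t ω))
    (hout : ∀ t : ℤ, wbar t = fun ω => (H t).mulVec (ξ t ω) + (J t).mulVec (w t ω))
    -- the state-transition matrix Φ(s + k, s), recursively in the number of steps k:
    (Φ : ℤ → ℕ → Matrix (Fin n) (Fin n) ℝ)
    (hΦ0 : ∀ s : ℤ, Φ s 0 = 1)
    (hΦ : ∀ (s : ℤ) (k : ℕ), Φ s (k + 1) = F (s + k) * Φ s k)
    (t : ℤ) :
    ∀ k : ℕ, cov ℙ (wbar (t + k + 1)) (wbar t) =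
        H (t + k + 1) * Φ (t + 1) k * (F t * (H t)ᵀ + G t * (J t)ᵀ) ∧
      H (t + k + 1) * Φ (t + 1) k * (F t * (H t)ᵀ + G t * (J t)ᵀ) = 0 := by
  intro k
  have hwbar2 : ∀ j, MemLp (fun ω => wbar t ω j) 2 ℙ := by
    rw [hout]
    exact memLp_mulVec_add_mulVec_apply _ _ (hξ2 t) (hw2 t)
  have hnoise : ∀ r, t + 1 ≤ r → cov ℙ (w r) (wbar t) = 0 := fun r hr => by
    rw [hout, cov_mulVec_add_mulVec_right _ _ (hξ2 t) (hw2 t) (hw2 r), ← cov_transpose,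
      hξw t r (by omega), hwhite, if_neg (by omega)]
    simp
  have hstate : cov ℙ (ξ (t + 1 + k)) (wbar t) = Φ (t + 1) k * (F t * (H t)ᵀ + G t * (J t)ᵀ) := by
    rw [cov_state_eq_transition_mul hξ2 hw2 hdyn hΦ0 hΦ hwbar2 hnoise,
      cov_state_succ_output hξ2 hw2 hwhite hξnorm hξw hdyn hout]
  refine ⟨?_, ?_⟩
  · rw [hout, cov_mulVec_add_mulVec_left _ _ (hξ2 _) (hw2 _) hwbar2, add_right_comm, hstate,
      hnoise _ (by omega), Matrix.mul_zero, add_zero, Matrix.mul_assoc]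
  · rw [mul_transpose_add_mul_transpose_eq_zero_of_fromBlocks (horth1 t), Matrix.mul_zero]

theorem stmt_15 {Ω : Type*} [MeasurableSpace Ω] (ℙ : Measure Ω) [IsProbabilityMeasure ℙ]
    {n p : ℕ} (F : ℤ → Matrix (Fin n) (Fin n) ℝ) (G : ℤ → Matrix (Fin n) (Fin p) ℝ)
    (H : ℤ → Matrix (Fin p) (Fin n) ℝ) (J : ℤ → Matrix (Fin p) (Fin p) ℝ)
    (horth1 : ∀ t : ℤ, Matrix.fromBlocks (F t) (G t) (H t) (J t) *
      (Matrix.fromBlocks (F t) (G t) (H t) (J t))ᵀ = 1)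
    (horth2 : ∀ t : ℤ, (Matrix.fromBlocks (F t) (G t) (H t) (J t))ᵀ *
      Matrix.fromBlocks (F t) (G t) (H t) (J t) = 1)
    (ξ : ℤ → Ω → Fin n → ℝ) (w wbar : ℤ → Ω → Fin p → ℝ)
    (hξ2 : ∀ t i, MemLp (fun ω => ξ t ω i) 2 ℙ)
    (hw2 : ∀ t i, MemLp (fun ω => w t ω i) 2 ℙ)
    (hwhite : ∀ t s : ℤ, cov ℙ (w t) (w s) = if t = s then 1 else 0)
    (hξnorm : ∀ t : ℤ, cov ℙ (ξ t) (ξ t) = 1)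
    (hξw : ∀ t s : ℤ, t ≤ s → cov ℙ (ξ t) (w s) = 0)
    (hdyn : ∀ t : ℤ, ξ (t + 1) = fun ω => (F t).mulVec (ξ t ω) + (G t).mulVec (w t ω))
    (hout : ∀ t : ℤ, wbar t = fun ω => (H t).mulVec (ξ t ω) + (J t).mulVec (w t ω))
    -- the state-transition matrix Φ(s + k, s), recursively in the number of steps k:
    (Φ : ℤ → ℕ → Matrix (Fin n) (Fin n) ℝ)
    (hΦ0 : ∀ s : ℤ, Φ s 0 = 1)
    (hΦ : ∀ (s : ℤ) (k : ℕ), Φ s (k + 1) = F (s + k) * Φ s k)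
    (t : ℤ) :
    ∀ k : ℕ, cov ℙ (wbar (t + k + 1)) (wbar t) =
        H (t + k + 1) * Φ (t + 1) k * (F t * (H t)ᵀ + G t * (J t)ᵀ) ∧
      H (t + k + 1) * Φ (t + 1) k * (F t * (H t)ᵀ + G t * (J t)ᵀ) = 0 :=
  stmt_15_general ℙ F G H J horth1 ξ w wbar hξ2 hw2 hwhite hξnorm hξw hdyn hout Φ hΦ0 hΦ t
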